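/- Let W be the random walk matrix of an irreducible Markov chain with stationary s, and let C_{uv} = H_{uv} + H_{vu} be the commute time. Then C_{uv} = (1_u − 1_v)ᵀ ((I−W)S)† (1_u − 1_v) = (1_u − 1_v)ᵀ S⁻¹ (I−W)† (1_u − 1_v) = (1_u − 1_v)ᵀ (L_b†)ᵀ U_b L_b† (1_u − 1_v), where S = diag(s), L_b = (I−W)S is the Eulerian rescaling, and U_b = (L_b + L_bᵀ)/2. -/

import Mathlib

/-!
Put `g = h_v - h_u`. The hitting-time recursions, together with `W s = s` and `∑ s = 1`, give
`gᵀ L_b = (1_u - 1_v)ᵀ`, while `h_v(v) = h_u(u) = 0` gives `C = gᵀ (1_u - 1_v)`. By the maximum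
principle, irreducibility forces the left kernels of `I - W` and `L_b` to consist of constant
vectors, so `1_u - 1_v` (which sums to zero) lies in the range of both matrices and is fixed by the
projections `L_b L_b†` and `(I - W)(I - W)†`. Each formula then collapses to `gᵀ (1_u - 1_v)`;
for the last one, a quadratic form only sees the symmetric part `U_b` of `L_b`.
-/

open Matrix Finset

/-- `B` is the Moore–Penrose pseudoinverse of `A` (the four Penrose conditions). -/
def IsMoorePenrose {m : Type*} [Fintype m] [DecidableEq m]
    (A B : Matrix m m ℝ) : Prop :=
  A * B * A = A ∧ B * A * B = B ∧ (A * B)ᵀ = A * B ∧ (B * A)ᵀ = B * A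

section LinearAlgebra

variable {m R : Type*} [Fintype m]

theorem dotProduct_mulVec_eq_of_vecMul_eq [NonUnitalCommSemiring R] {A B : Matrix m m R}
    {g y x : m → R} (hg : g ᵥ* A = y) (hx : (A * B) *ᵥ x = x) :
    y ⬝ᵥ B *ᵥ x = g ⬝ᵥ x := by
  rw [← hg, ← dotProduct_mulVec, mulVec_mulVec, hx]

theorem dotProduct_transpose_mul_mul_mulVec [NonUnitalCommSemiring R] (B U : Matrix m m R)
    (x : m → R) : x ⬝ᵥ (Bᵀ * U * B) *ᵥ x = (B *ᵥ x) ⬝ᵥ U *ᵥ (B *ᵥ x) := by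
  rw [← mulVec_mulVec, ← mulVec_mulVec, dotProduct_mulVec, vecMul_transpose]

theorem dotProduct_half_smul_add_transpose_mulVec [Field R] [NeZero (2 : R)]
    (A : Matrix m m R) (x : m → R) :
    x ⬝ᵥ ((1 / 2 : R) • (A + Aᵀ)) *ᵥ x = x ⬝ᵥ A *ᵥ x := by
  have hT : x ⬝ᵥ Aᵀ *ᵥ x = x ⬝ᵥ A *ᵥ x := by
    rw [mulVec_transpose, dotProduct_comm, dotProduct_mulVec]
  rw [smul_mulVec, add_mulVec, dotProduct_smul, dotProduct_add, hT, smul_eq_mul]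
  field_simp
  ring

theorem vecMul_mul_diagonal_eq_zero_iff [DecidableEq m] [Semiring R] [NoZeroDivisors R]
    {A : Matrix m m R} {s : m → R} (hs : ∀ i, s i ≠ 0) {y : m → R} :
    y ᵥ* (A * diagonal s) = 0 ↔ y ᵥ* A = 0 := by
  simp [← vecMul_vecMul, funext_iff, vecMul_diagonal, hs]

theorem vecMul_eq_vecMul_inv_of_vecMul_mul_eq [DecidableEq m] [CommRing R]
    {A S : Matrix m m R} (hS : IsUnit S.det) {g y : m → R} (h : g ᵥ* (A * S) = y) :
    g ᵥ* A = y ᵥ* S⁻¹ := by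
  rw [← h, vecMul_vecMul, Matrix.mul_assoc, mul_nonsing_inv _ hS, Matrix.mul_one]

end LinearAlgebra

theorem IsMoorePenrose.mul_mulVec_eq_self {m : Type*} [Fintype m] [DecidableEq m]
    {A B : Matrix m m ℝ} (hAB : IsMoorePenrose A B)
    (hker : ∀ y, y ᵥ* A = 0 → ∑ i, y i = 0 → y = 0) (hcol : 1 ᵥ* A = 0)
    {x : m → ℝ} (hx : ∑ i, x i = 0) : (A * B) *ᵥ x = x := by
  obtain ⟨hABA, -, hAB_symm, -⟩ := hAB
  have hker_res : (x - (A * B) *ᵥ x) ᵥ* A = 0 := by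
    rw [sub_vecMul, ← vecMul_transpose, hAB_symm, vecMul_vecMul, hABA, sub_self]
  have hsum_res : ∑ i, (x - (A * B) *ᵥ x) i = 0 := by
    rw [← one_dotProduct, dotProduct_sub, one_dotProduct, hx, ← mulVec_mulVec,
      dotProduct_mulVec, hcol, zero_dotProduct, sub_zero]
  exact (sub_eq_zero.1 (hker _ hker_res hsum_res)).symm

section MarkovChain

variable {ι : Type*} [Fintype ι] [DecidableEq ι] {W : Matrix ι ι ℝ}

theorem eq_of_vecMul_eq_self_of_mem_colStochastic (hW : W ∈ colStochastic ℝ ι)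
    (hirr : ∀ i j, ∃ k : ℕ, 0 < (W ^ k) i j) {x : ι → ℝ} (hx : x ᵥ* W = x) (i j : ι) :
    x i = x j := by
  have hpow : ∀ k : ℕ, x ᵥ* W ^ k = x := by
    intro k
    induction k with
    | zero => exact vecMul_one x
    | succ k ih => rw [pow_succ, ← vecMul_vecMul, ih, hx]
  obtain ⟨top, -, hmax⟩ := Finset.exists_max_image univ x ⟨i, mem_univ i⟩
  -- `x top` is an average of the `x z` with weights `(W ^ k) z top`, positive at `z = m`.
  suffices h : ∀ m, x m = x top by rw [h i, h j]
  intro m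
  refine (hmax m (mem_univ m)).antisymm (not_lt.1 fun hlt => ?_)
  obtain ⟨k, hk⟩ := hirr m top
  have hP := pow_mem hW k
  have : ∑ z, x z * (W ^ k) z top < ∑ z, x top * (W ^ k) z top :=
    Finset.sum_lt_sum
      (fun z _ => mul_le_mul_of_nonneg_right (hmax z (mem_univ z)) (hP.1 z top))
      ⟨m, mem_univ m, mul_lt_mul_of_pos_right hlt hk⟩
  rw [← mul_sum, sum_col_of_mem_colStochastic hP, mul_one] at this
  have hfix := congrFun (hpow k) top
  simp only [vecMul, dotProduct] at hfix
  linarith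

theorem eq_zero_of_vecMul_one_sub_eq_zero (hW : W ∈ colStochastic ℝ ι)
    (hirr : ∀ i j, ∃ k : ℕ, 0 < (W ^ k) i j) {y : ι → ℝ} (hy : y ᵥ* (1 - W) = 0)
    (hsum : ∑ i, y i = 0) : y = 0 := by
  have hconst := eq_of_vecMul_eq_self_of_mem_colStochastic hW hirr
    (by rwa [vecMul_sub, vecMul_one, sub_eq_zero, eq_comm] at hy)
  funext i
  have : (Fintype.card ι : ℝ) * y i = 0 := by
    rw [← hsum]
    simp [hconst _ i]
  exact (mul_eq_zero.1 this).resolve_left (Nat.cast_ne_zero.2 (Fintype.card_pos_iff.2 ⟨i⟩).ne')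

theorem pos_of_mulVec_eq_self (hWnn : ∀ i j, 0 ≤ W i j)
    (hirr : ∀ i j, ∃ k : ℕ, 0 < (W ^ k) i j) {s : ι → ℝ} (hs : ∀ i, 0 ≤ s i) (hs0 : s ≠ 0)
    (hstat : W *ᵥ s = s) (j : ι) : 0 < s j := by
  have hpow : ∀ k : ℕ, W ^ k *ᵥ s = s := by
    intro k
    induction k with
    | zero => exact one_mulVec s
    | succ k ih => rw [pow_succ', ← mulVec_mulVec, ih, hstat]
  obtain ⟨i, hi⟩ : ∃ i, 0 < s i := by
    by_contra! h
    exact hs0 (funext fun i => (h i).antisymm (hs i))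
  obtain ⟨k, hk⟩ := hirr j i
  calc 0 < (W ^ k) j i * s i := mul_pos hk hi
    _ ≤ ∑ z, (W ^ k) j z * s z :=
      single_le_sum (fun z _ => mul_nonneg (pow_apply_nonneg hWnn k j z) (hs z)) (mem_univ i)
    _ = s j := congrFun (hpow k) j

theorem vecMul_one_sub_mul_diagonal_eq_of_hitting {s : ι → ℝ} (hs1 : ∑ i, s i = 1)
    (hstat : W *ᵥ s = s) {t : ι} {h : ι → ℝ}
    (hrec : ∀ w, w ≠ t → h w = 1 + ∑ z, W z w * h z) :
    h ᵥ* ((1 - W) * diagonal s) = s - Pi.single t 1 := by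
  set r := h ᵥ* ((1 - W) * diagonal s)
  have hoff : ∀ w, w ≠ t → r w = s w := by
    intro w hw
    simp only [r, ← vecMul_vecMul, vecMul_diagonal, vecMul_sub, vecMul_one, Pi.sub_apply]
    simp only [vecMul, dotProduct, mul_comm (h _)]
    rw [hrec w hw]
    ring
  -- `r` sums to `h ⬝ᵥ (1 - W) s = 0`.
  have hsum : ∑ w, r w = 0 := by
    have hs : diagonal s *ᵥ 1 = s := funext fun i => by simp [mulVec_diagonal]
    rw [← dotProduct_one, ← dotProduct_mulVec, ← mulVec_mulVec, hs, sub_mulVec, one_mulVec,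
      hstat, sub_self, dotProduct_zero]
  funext w
  rcases eq_or_ne w t with rfl | hw
  · have h1 := add_sum_erase univ r (mem_univ w)
    have h2 := add_sum_erase univ s (mem_univ w)
    rw [sum_congr rfl fun z hz => hoff z (ne_of_mem_erase hz)] at h1
    simp only [Pi.sub_apply, Pi.single_eq_same]
    linarith
  · simp [hoff w hw, hw]

end MarkovChain

/-- Commute time formulas: with `S = diag(s)`, `L_b = (I - W) S` the Eulerian rescaling
and `U_b = (L_b + L_bᵀ)/2`, the commute time `C_{uv} = H_{uv} + H_{vu}` satisfies
`C_{uv} = (1_u - 1_v)ᵀ ((I-W)S)† (1_u - 1_v) = (1_u - 1_v)ᵀ S⁻¹ (I-W)† (1_u - 1_v)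
 = (1_u - 1_v)ᵀ (L_b†)ᵀ U_b L_b† (1_u - 1_v)`. -/
theorem commute_time_formulas {n : ℕ} (W : Matrix (Fin n) (Fin n) ℝ)
    (hWnn : ∀ i j, 0 ≤ W i j) (hWcol : ∀ j, ∑ i, W i j = 1)
    (hirr : ∀ i j : Fin n, ∃ k : ℕ, 0 < (W ^ k) i j)
    (s : Fin n → ℝ) (hs : ∀ i, 0 ≤ s i) (hs1 : ∑ i, s i = 1)
    (hstat : W.mulVec s = s)
    (u v : Fin n)
    -- `hv` is the vector of hitting times to `v`, `hu` to `u`.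
    (hv : Fin n → ℝ) (hv0 : hv v = 0)
    (hvrec : ∀ w : Fin n, w ≠ v → hv w = 1 + ∑ z, W z w * hv z)
    (hu : Fin n → ℝ) (hu0 : hu u = 0)
    (hurec : ∀ w : Fin n, w ≠ u → hu w = 1 + ∑ z, W z w * hu z)
    (C : ℝ) (hC : C = hv u + hu v)
    (Lb Ub : Matrix (Fin n) (Fin n) ℝ)
    (hLb : Lb = ((1 : Matrix (Fin n) (Fin n) ℝ) - W) * Matrix.diagonal s)
    (hUb : Ub = (1 / 2 : ℝ) • (Lb + Lbᵀ))
    (Lbp Lp : Matrix (Fin n) (Fin n) ℝ)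
    (hLbp : IsMoorePenrose Lb Lbp)
    (hLp : IsMoorePenrose ((1 : Matrix (Fin n) (Fin n) ℝ) - W) Lp) :
    C = ((Pi.single u 1 : Fin n → ℝ) - Pi.single v 1) ⬝ᵥ
          Lbp.mulVec ((Pi.single u 1 : Fin n → ℝ) - Pi.single v 1) ∧
    C = ((Pi.single u 1 : Fin n → ℝ) - Pi.single v 1) ⬝ᵥ
          ((Matrix.diagonal s)⁻¹ * Lp).mulVec
            ((Pi.single u 1 : Fin n → ℝ) - Pi.single v 1) ∧
    C = ((Pi.single u 1 : Fin n → ℝ) - Pi.single v 1) ⬝ᵥ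
          (Lbpᵀ * Ub * Lbp).mulVec ((Pi.single u 1 : Fin n → ℝ) - Pi.single v 1) := by
  set χ : Fin n → ℝ := Pi.single u 1 - Pi.single v 1
  have hW : W ∈ colStochastic ℝ (Fin n) := mem_colStochastic_iff_sum.2 ⟨hWnn, hWcol⟩
  have hs_ne : ∀ i, s i ≠ 0 := fun i => (pos_of_mulVec_eq_self hWnn hirr hs
    (fun h => by simp [h] at hs1) hstat i).ne'
  have hg : (hv - hu) ᵥ* Lb = χ := by
    rw [hLb, sub_vecMul, vecMul_one_sub_mul_diagonal_eq_of_hitting hs1 hstat hvrec,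
      vecMul_one_sub_mul_diagonal_eq_of_hitting hs1 hstat hurec, sub_sub_sub_cancel_left]
  have hCg : C = (hv - hu) ⬝ᵥ χ := by simp [χ, hC, hu0, hv0]
  have hcol : (1 : Fin n → ℝ) ᵥ* (1 - W) = 0 := by
    rw [vecMul_sub, vecMul_one, one_vecMul_of_mem_colStochastic hW, sub_self]
  have hχ : ∑ i, χ i = 0 := by simp [χ]
  have hker : ∀ y, y ᵥ* (1 - W) = 0 → ∑ i, y i = 0 → y = 0 := fun _ =>
    eq_zero_of_vecMul_one_sub_eq_zero hW hirr
  have hLχ : ((1 - W) * Lp) *ᵥ χ = χ := hLp.mul_mulVec_eq_self hker hcol hχ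
  have hLbχ : (Lb * Lbp) *ᵥ χ = χ := by
    refine hLbp.mul_mulVec_eq_self (fun y hy => hker y ?_) ?_ hχ
    · rwa [hLb, vecMul_mul_diagonal_eq_zero_iff hs_ne] at hy
    · rw [hLb, ← vecMul_vecMul, hcol, zero_vecMul]
  have hg' : (hv - hu) ᵥ* (1 - W) = χ ᵥ* (diagonal s)⁻¹ :=
    vecMul_eq_vecMul_inv_of_vecMul_mul_eq (by simpa [Finset.prod_ne_zero_iff] using hs_ne)
      (hLb ▸ hg)
  have first : C = χ ⬝ᵥ Lbp *ᵥ χ := by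
    rw [dotProduct_mulVec_eq_of_vecMul_eq hg hLbχ, hCg]
  refine ⟨first, ?_, ?_⟩
  · rw [← mulVec_mulVec, dotProduct_mulVec, dotProduct_mulVec_eq_of_vecMul_eq hg' hLχ, hCg]
  · rw [dotProduct_transpose_mul_mul_mulVec, hUb, dotProduct_half_smul_add_transpose_mulVec,
      mulVec_mulVec, hLbχ, dotProduct_comm, first]
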